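/- arXiv:1010.5300 — 5 statements merged into one kernel-verified Lean document; each statement's English description precedes it below -/
import Mathlib

section
/- If an element y is orthogonal to every element of a frame {x_1,…,x_N} of a subspace S*, then y is orthogonal to every element of S*. -/
/-- If `y` is orthogonal to every element of a frame `X` of the subspace
`S* = {z | ∑ x in X, p x z = 1}`, then `y` is orthogonal to every element of `S*`. -/
theorem stmt3 {S : Type*} (p : S → S → ℝ)
    (hbound : ∀ x y, 0 ≤ p x y ∧ p x y ≤ 1)
    (hsym : ∀ x y, p x y = p y x)
    (hone : ∀ x y, p x y = 1 ↔ x = y)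
    -- frame axiom: every maximal mutually orthogonal finite set is a basis
    (hframe : ∀ F : Finset S,
      (∀ x ∈ F, ∀ y ∈ F, x ≠ y → p x y = 0) →
      (∀ y : S, (∀ x ∈ F, p y x = 0) → False) →
      ∀ a : S, ∑ x ∈ F, p x a = 1)
    -- every mutually orthogonal finite set extends to a maximal one
    (hext : ∀ F : Finset S, (∀ x ∈ F, ∀ y ∈ F, x ≠ y → p x y = 0) →
      ∃ G : Finset S, F ⊆ G ∧ (∀ x ∈ G, ∀ y ∈ G, x ≠ y → p x y = 0) ∧
        (∀ y : S, (∀ x ∈ G, p y x = 0) → False))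
    (X : Finset S) (hX : ∀ x ∈ X, ∀ y ∈ X, x ≠ y → p x y = 0)
    (y : S) (hy : ∀ x ∈ X, p y x = 0)
    (z : S) (hz : ∑ x ∈ X, p x z = 1) :
    p y z = 0 := by
  classical
  have hyX : y ∉ X := by
    intro hmem
    have := hy y hmem
    have h1 : p y y = 1 := (hone y y).mpr rfl
    linarith
  have horth : ∀ x ∈ insert y X, ∀ w ∈ insert y X, x ≠ w → p x w = 0 := by
    intro x hx w hw hne
    rcases Finset.mem_insert.mp hx with rfl | hx
    · rcases Finset.mem_insert.mp hw with rfl | hw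
      · exact absurd rfl hne
      · exact hy w hw
    · rcases Finset.mem_insert.mp hw with h | hw
      · rw [h, hsym]; exact hy x hx
      · exact hX x hx w hw hne
  obtain ⟨G, hsub, hGorth, hGmax⟩ := hext (insert y X) horth
  have hXG : X ⊆ G := fun x hx => hsub (Finset.mem_insert_of_mem hx)
  have hyG : y ∈ G := hsub (Finset.mem_insert_self y X)
  have hsumG : ∑ x ∈ G, p x z = 1 := hframe G hGorth hGmax z
  have hsplit : ∑ x ∈ G, p x z = ∑ x ∈ X, p x z + ∑ x ∈ G \ X, p x z := by
    rw [add_comm, Finset.sum_sdiff hXG]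
  have hrest : ∑ x ∈ G \ X, p x z = 0 := by
    rw [hsplit, hz] at hsumG; linarith
  have hzero : ∀ x ∈ G \ X, p x z = 0 :=
    (Finset.sum_eq_zero_iff_of_nonneg (fun x _ => (hbound x z).1)).mp hrest
  have := hzero y (Finset.mem_sdiff.mpr ⟨hyG, hyX⟩)
  exact this
end

section
/- From the identity p(a,c)·c(z) + p(a,c′)·c′(z) = α·a(z) + (1−α)·b(z) for all z (with c ⊥ c′, 0 < α < 1, a ≠ b), it follows that α = 1/2, p(b,c) = p(a,c), p(b,c′) = p(a,c′), p(a,c)+p(a,c′)=1, and p(a,c) = (1 ± √p(a,b))/2. -/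
/-- Consequences of Axiom IV: from the identity
`p a c * p c z + p a c' * p c' z = α * p a z + (1-α) * p b z` for all `z`,
with `c ⊥ c'` a frame, `0 < α < 1`, `a ≠ b`, it follows that
`p a c + p a c' = 1`, `p b c = p a c`, `p b c' = p a c'`, `α = 1/2`, and
`p a c = (1 ± √(p a b))/2`. -/
theorem stmt6 {S : Type*} (p : S → S → ℝ)
    (hbound : ∀ x y, 0 ≤ p x y ∧ p x y ≤ 1)
    (hsym : ∀ x y, p x y = p y x)
    (hone : ∀ x y, p x y = 1 ↔ x = y)
    (a b c c' : S) (hab : a ≠ b)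
    (hcc' : p c c' = 0)
    -- {c, c'} is a frame (Axiom III)
    (hframe : ∀ z : S, p c z + p c' z = 1)
    (α : ℝ) (hα0 : 0 < α) (hα1 : α < 1)
    (hIV : ∀ z : S, p a c * p c z + p a c' * p c' z = α * p a z + (1 - α) * p b z) :
    p a c + p a c' = 1 ∧
    p b c = p a c ∧ p b c' = p a c' ∧
    α = 1 / 2 ∧
    (p a c = (1 + Real.sqrt (p a b)) / 2 ∨ p a c = (1 - Real.sqrt (p a b)) / 2) := by
  have hcc : p c c = 1 := (hone c c).mpr rfl
  have hc'c' : p c' c' = 1 := (hone c' c').mpr rfl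
  have hc'c : p c' c = 0 := by rw [hsym]; exact hcc'
  have hsum : p a c + p a c' = 1 := by
    have := hframe a
    rw [hsym c a, hsym c' a] at this; exact this
  have hbc : p b c = p a c := by
    have h := hIV c
    rw [hcc, hc'c] at h
    nlinarith
  have hbc' : p b c' = p a c' := by
    have h := hIV c'
    rw [hc'c', hcc'] at h
    nlinarith
  have hqa : p a c * p c a + p a c' * p c' a = α * p a a + (1 - α) * p b a := hIV a
  have hqb : p a c * p c b + p a c' * p c' b = α * p a b + (1 - α) * p b b := hIV b
  have haa : p a a = 1 := (hone a a).mpr rfl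
  have hbb : p b b = 1 := (hone b b).mpr rfl
  rw [haa, hsym c a, hsym c' a, hsym b a] at hqa
  rw [hbb, hsym c b, hsym c' b, hbc, hbc'] at hqb
  have hq1 : p a b ≠ 1 := fun h => hab ((hone a b).mp h)
  have hqle : p a b ≤ 1 := (hbound a b).2
  have hqlt : p a b < 1 := lt_of_le_of_ne hqle hq1
  have hα : α = 1 / 2 := by nlinarith [hqlt]
  refine ⟨hsum, hbc, hbc', hα, ?_⟩
  have hsq : (2 * p a c - 1) ^ 2 = p a b := by nlinarith
  have hs : Real.sqrt (p a b) = |2 * p a c - 1| := by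
    rw [← hsq, Real.sqrt_sq_eq_abs]
  rcases le_or_gt 0 (2 * p a c - 1) with h | h
  · left; rw [hs, abs_of_nonneg h]; ring
  · right; rw [hs, abs_of_neg h]; ring
end

section
/- In a local hidden variable model, where p(x,y) = μ(Λ(x) ∩ Λ(y)) with μ(Λ(x)) = 1 for all x, the sup-metric satisfies d(x,y) = 1 − p(x,y). -/
open MeasureTheory

/-- In a local hidden variable model, with `p x y = μ(Λ x ∩ Λ y)` and `μ(Λ x) = 1`
for all `x`, the sup-metric satisfies `d(x,y) = 1 - p x y`. -/
theorem stmt9 {S : Type*} {Ω : Type*} [MeasurableSpace Ω]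
    (μ : Measure Ω) (Λ : S → Set Ω)
    (hmeas : ∀ x, MeasurableSet (Λ x))
    (hone : ∀ x, μ (Λ x) = 1)
    (p : S → S → ℝ) (hp : ∀ x y, p x y = (μ (Λ x ∩ Λ y)).toReal)
    (x y : S) :
    (⨆ z : S, |p x z - p y z|) = 1 - p x y := by
  have hle : ∀ a b : S, μ (Λ a ∩ Λ b) ≤ 1 := fun a b => by
    rw [← hone a]; exact measure_mono Set.inter_subset_left
  have hfin : ∀ a b : S, μ (Λ a ∩ Λ b) ≠ ⊤ := fun a b =>
    ne_top_of_le_ne_top ENNReal.one_ne_top (hle a b)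
  have hpb : ∀ a b : S, p a b ≤ 1 := fun a b => by
    rw [hp]
    calc (μ (Λ a ∩ Λ b)).toReal ≤ (1 : ENNReal).toReal :=
          ENNReal.toReal_mono ENNReal.one_ne_top (hle a b)
      _ = 1 := by simp
  have hpnn : ∀ a b : S, 0 ≤ p a b := fun a b => by rw [hp]; exact ENNReal.toReal_nonneg
  have hsymm : ∀ a b : S, p a b = p b a := fun a b => by
    rw [hp, hp, Set.inter_comm]
  -- key ENNReal inequality
  have key : ∀ a b c : S, μ (Λ a ∩ Λ c) + μ (Λ a ∩ Λ b) ≤ μ (Λ a) + μ (Λ b ∩ Λ c) := by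
    intro a b c
    have h1 := measure_union_add_inter (μ := μ) (Λ a ∩ Λ c) ((hmeas a).inter (hmeas b))
    rw [← h1]
    refine add_le_add (measure_mono ?_) (measure_mono ?_)
    · exact Set.union_subset Set.inter_subset_left Set.inter_subset_left
    · intro w hw
      exact ⟨hw.2.2, hw.1.2⟩
  have keyR : ∀ a b c : S, p a c - p b c ≤ 1 - p a b := by
    intro a b c
    have := key a b c
    have h2 : p a c + p a b ≤ 1 + p b c := by
      have := ENNReal.toReal_mono (by
        rw [ENNReal.add_ne_top]; exact ⟨by rw [hone a]; exact ENNReal.one_ne_top, hfin b c⟩) this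
      rw [ENNReal.toReal_add (hfin a c) (hfin a b),
        ENNReal.toReal_add (by rw [hone a]; exact ENNReal.one_ne_top) (hfin b c),
        hone a] at this
      simpa [hp] using this
    linarith
  have bound : ∀ z : S, |p x z - p y z| ≤ 1 - p x y := by
    intro z
    rw [abs_le]
    constructor
    · have := keyR y x z
      rw [hsymm y x] at this
      linarith
    · exact keyR x y z
  have hval : |p x x - p y x| = 1 - p x y := by
    have hxx : p x x = 1 := by rw [hp, Set.inter_self, hone]; simp
    rw [hxx, hsymm y x, abs_of_nonneg (by linarith [hpb x y])]
  haveI : Nonempty S := ⟨x⟩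
  apply le_antisymm
  · exact ciSup_le bound
  · rw [← hval]
    exact le_ciSup ⟨1 - p x y, Set.forall_mem_range.2 bound⟩ x
end

section
/- The information entropy of a pure qubit state in real quantum mechanics (rank R = 1) is 2 ln 2 − 1: the weighted average ∫₀¹ g(δ)(1−δ²)^{−1/2} dδ / ∫₀¹ (1−δ²)^{−1/2} dδ = 2 ln 2 − 1, where g is the binary entropy of ((1+δ)/2, (1−δ)/2). -/
open Real MeasureTheory Set intervalIntegral

lemma log_intable : IntervalIntegrable Real.log volume 0 (π/2) := by
  rw [intervalIntegrable_iff_integrableOn_Ioc_of_le (by linarith [Real.one_le_pi_div_two])]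
  rw [show Ioc (0:ℝ) (π/2) = Ioc 0 1 ∪ Ioc 1 (π/2) from
    (Ioc_union_Ioc_eq_Ioc (by norm_num) Real.one_le_pi_div_two).symm]
  apply IntegrableOn.union
  · have hc : ContinuousOn (fun x : ℝ => x - x * Real.log x) (Icc (0:ℝ) 1) :=
      (continuous_id.sub Real.continuous_mul_log).continuousOn
    have hd : ∀ x ∈ Ioo (0:ℝ) 1, HasDerivAt (fun x : ℝ => x - x * Real.log x)
        (-Real.log x) x := by
      intro x hx
      have : HasDerivAt (fun x : ℝ => x - x * Real.log x)
          (1 - (1 * Real.log x + x * x⁻¹)) x :=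
        (hasDerivAt_id x).sub ((hasDerivAt_id x).mul (Real.hasDerivAt_log hx.1.ne'))
      convert this using 1
      rw [one_mul, mul_inv_cancel₀ hx.1.ne']; ring
    have hpos : ∀ x ∈ Ioo (0:ℝ) 1, 0 ≤ -Real.log x := by
      intro x hx
      simpa using Real.log_nonpos hx.1.le hx.2.le
    have h := (integrableOn_deriv_of_nonneg hc hd hpos).neg
    have : IntegrableOn (fun x => -(-Real.log x)) (Ioc (0:ℝ) 1) volume := h
    simpa using this
  · refine (Real.continuousOn_log.mono ?_).integrableOn_Icc.mono_set Ioc_subset_Icc_self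
    intro x hx
    simp only [mem_compl_iff, mem_singleton_iff]
    have := hx.1
    intro h; rw [h] at this; norm_num at this

lemma logsin_intable : IntervalIntegrable (fun x => Real.log (Real.sin x)) volume 0 (π/2) := by
  have hle : (0:ℝ) ≤ π/2 := by linarith [Real.one_le_pi_div_two]
  rw [intervalIntegrable_iff_integrableOn_Ioc_of_le hle]
  have hmeas : AEStronglyMeasurable (fun x => Real.log (Real.sin x))
      (volume.restrict (Ioc (0:ℝ) (π/2))) :=
    (Real.measurable_log.comp Real.continuous_sin.measurable).aestronglyMeasurable
  have hg : IntegrableOn (fun x => |Real.log x| + |Real.log (2/π)|) (Ioc (0:ℝ) (π/2)) volume := by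
    refine Integrable.add ?_ (integrableOn_const measure_Ioc_lt_top.ne)
    exact ((intervalIntegrable_iff_integrableOn_Ioc_of_le hle).1 log_intable).abs
  refine Integrable.mono hg hmeas (ae_restrict_of_forall_mem measurableSet_Ioc ?_)
  intro x hx
  have hx0 : 0 < x := hx.1
  have hxpi : x < π := lt_of_le_of_lt hx.2 (by linarith [Real.pi_pos])
  have hs : 0 < Real.sin x := Real.sin_pos_of_pos_of_lt_pi hx0 hxpi
  have hlow : 2/π * x ≤ Real.sin x := Real.mul_le_sin hx0.le hx.2
  have h2pi : (0:ℝ) < 2/π := by positivity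
  have hlog : Real.log (2/π * x) ≤ Real.log (Real.sin x) :=
    Real.log_le_log (by positivity) hlow
  rw [Real.log_mul h2pi.ne' hx0.ne'] at hlog
  have hup : Real.log (Real.sin x) ≤ 0 := Real.log_nonpos hs.le (Real.sin_le_one x)
  rw [Real.norm_eq_abs, Real.norm_eq_abs, abs_of_nonpos hup]
  have n1 : -Real.log x ≤ |Real.log x| := neg_le_abs _
  have n2 : -Real.log (2/π) ≤ |Real.log (2/π)| := neg_le_abs _
  have n3 := le_abs_self (|Real.log x| + |Real.log (2/π)|)
  linarith

lemma logcos_intable : IntervalIntegrable (fun x => Real.log (Real.cos x)) volume 0 (π/2) := by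
  have h := logsin_intable.comp_sub_left (π/2)
  simp only [sub_zero, sub_self] at h
  have h2 : (fun x => Real.log (Real.sin (π/2 - x))) = fun x => Real.log (Real.cos x) := by
    funext x; rw [Real.sin_pi_div_two_sub]
  rw [h2] at h
  exact h.symm

lemma integral_logcos : ∫ x in (0:ℝ)..(π/2), Real.log (Real.cos x)
    = ∫ x in (0:ℝ)..(π/2), Real.log (Real.sin x) := by
  have h := intervalIntegral.integral_comp_sub_left (a := 0) (b := π/2)
    (fun x => Real.log (Real.sin x)) (π/2)
  simp only [sub_zero, sub_self] at h
  rw [← h]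
  congr 1
  funext x; rw [Real.sin_pi_div_two_sub]

lemma integral_logsin : ∫ x in (0:ℝ)..(π/2), Real.log (Real.sin x) = -(π/2) * Real.log 2 := by
  set I := ∫ x in (0:ℝ)..(π/2), Real.log (Real.sin x) with hI
  -- second half
  have hint2 : IntervalIntegrable (fun x => Real.log (Real.sin x)) volume (π/2) π := by
    have h := logsin_intable.comp_sub_left π
    simp only [sub_zero] at h
    have h2 : (fun x => Real.log (Real.sin (π - x))) = fun x => Real.log (Real.sin x) := by
      funext x; rw [Real.sin_pi_sub]
    rw [h2] at h
    have : π - π/2 = π/2 := by ring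
    rw [this] at h
    exact h.symm
  have hval2 : ∫ x in (π/2:ℝ)..π, Real.log (Real.sin x) = I := by
    have h := intervalIntegral.integral_comp_sub_left (a := 0) (b := π/2)
      (fun x => Real.log (Real.sin x)) π
    simp only [sub_zero] at h
    have h2 : (fun x => Real.log (Real.sin (π - x))) = fun x => Real.log (Real.sin x) := by
      funext x; rw [Real.sin_pi_sub]
    rw [h2] at h
    have h3 : π - π/2 = π/2 := by ring
    rw [h3] at h
    exact h.symm
  have hfull : ∫ x in (0:ℝ)..π, Real.log (Real.sin x) = 2 * I := by
    rw [← intervalIntegral.integral_add_adjacent_intervals logsin_intable hint2, hval2]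
    ring
  -- duplication
  have hdup : ∫ x in (0:ℝ)..(π/2), Real.log (Real.sin (2*x)) = I := by
    have h := intervalIntegral.integral_comp_mul_left (a := 0) (b := π/2)
      (fun x => Real.log (Real.sin x)) (two_ne_zero)
    simp only [mul_zero] at h
    rw [show (2:ℝ) * (π/2) = π by ring] at h
    rw [h, hfull]
    norm_num
    ring
  have hsplit : ∫ x in (0:ℝ)..(π/2), Real.log (Real.sin (2*x))
      = ∫ x in (0:ℝ)..(π/2), (Real.log 2 + Real.log (Real.sin x) + Real.log (Real.cos x)) := by
    apply intervalIntegral.integral_congr_ae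
    have hae : ∀ᵐ (x:ℝ), x ≠ π/2 := by
      have : ({π/2} : Set ℝ) =ᵐ[volume] (∅ : Set ℝ) := by
        simp [ae_eq_empty, measure_singleton]
      filter_upwards [this.mem_iff] with x hx
      intro hxe
      simp [hxe] at hx
    filter_upwards [hae] with x hx hmem
    rw [uIoc_of_le (by linarith [Real.pi_pos]), mem_Ioc] at hmem
    have hx0 : 0 < x := hmem.1
    have hx2 : x < π/2 := lt_of_le_of_ne hmem.2 hx
    have hs : 0 < Real.sin x := Real.sin_pos_of_pos_of_lt_pi hx0 (by linarith [Real.pi_pos])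
    have hc : 0 < Real.cos x := Real.cos_pos_of_mem_Ioo ⟨by linarith [Real.pi_pos], hx2⟩
    rw [Real.sin_two_mul, Real.log_mul (by positivity) hc.ne', Real.log_mul two_ne_zero hs.ne']
  have hrhs : ∫ x in (0:ℝ)..(π/2), (Real.log 2 + Real.log (Real.sin x) + Real.log (Real.cos x))
      = π/2 * Real.log 2 + I + I := by
    rw [intervalIntegral.integral_add (intervalIntegrable_const.add logsin_intable)
      logcos_intable,
      intervalIntegral.integral_add intervalIntegrable_const logsin_intable,
      intervalIntegral.integral_const, integral_logcos]
    simp only [smul_eq_mul, sub_zero]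
    linarith [hI]
  have : I = π/2 * Real.log 2 + I + I := by rw [← hrhs, ← hsplit, hdup]
  linarith

lemma phi_intable : IntervalIntegrable
    (fun θ => 2*Real.sin θ*Real.log (1+Real.sin θ) - 2*Real.sin θ*Real.log (Real.cos θ))
    volume 0 (π/2) := by
  apply IntervalIntegrable.sub
  · apply ContinuousOn.intervalIntegrable
    apply ContinuousOn.mul (by fun_prop)
    apply Real.continuousOn_log.comp (by fun_prop)
    intro x hx
    rw [Set.uIcc_of_le (by linarith [Real.pi_pos])] at hx
    have : 0 ≤ Real.sin x := Real.sin_nonneg_of_nonneg_of_le_pi hx.1 (by linarith [Real.pi_pos, hx.2])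
    simp only [Set.mem_compl_iff, Set.mem_singleton_iff]
    intro h; linarith
  · exact logcos_intable.continuousOn_mul (by fun_prop)

lemma integral_phi : ∫ θ in (0:ℝ)..(π/2),
    (2*Real.sin θ*Real.log (1+Real.sin θ) - 2*Real.sin θ*Real.log (Real.cos θ)) = π := by
  have hab : (0:ℝ) ≤ π/2 := by linarith [Real.pi_pos]
  have hcont : ContinuousOn
      (fun θ => 2*θ - 2*(Real.cos θ * Real.log (1+Real.sin θ))
        + 2*(Real.cos θ * Real.log (Real.cos θ))) (Set.Icc 0 (π/2)) := by
    apply ContinuousOn.add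
    · apply ContinuousOn.sub (by fun_prop)
      apply ContinuousOn.mul continuousOn_const
      apply ContinuousOn.mul (by fun_prop)
      apply Real.continuousOn_log.comp (by fun_prop)
      intro x hx
      have : 0 ≤ Real.sin x := Real.sin_nonneg_of_nonneg_of_le_pi hx.1
        (by linarith [Real.pi_pos, hx.2])
      simp only [Set.mem_compl_iff, Set.mem_singleton_iff]
      intro h; linarith
    · exact (continuous_const.mul
        (Real.continuous_mul_log.comp Real.continuous_cos)).continuousOn
  have hderiv : ∀ x ∈ Set.Ioo (0:ℝ) (π/2), HasDerivAt
      (fun θ => 2*θ - 2*(Real.cos θ * Real.log (1+Real.sin θ))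
        + 2*(Real.cos θ * Real.log (Real.cos θ)))
      (2*Real.sin x*Real.log (1+Real.sin x) - 2*Real.sin x*Real.log (Real.cos x)) x := by
    intro x hx
    have hc : 0 < Real.cos x := Real.cos_pos_of_mem_Ioo ⟨by linarith [hx.1, Real.pi_pos], hx.2⟩
    have hs : 0 < Real.sin x := Real.sin_pos_of_pos_of_lt_pi hx.1 (by linarith [Real.pi_pos, hx.2])
    have h1s : (0:ℝ) < 1 + Real.sin x := by linarith
    have d1 : HasDerivAt (fun θ => Real.cos θ * Real.log (1+Real.sin θ))
        (-Real.sin x * Real.log (1+Real.sin x) + Real.cos x * (Real.cos x / (1+Real.sin x))) x := by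
      apply HasDerivAt.mul (Real.hasDerivAt_cos x)
      have : HasDerivAt (fun θ => 1 + Real.sin θ) (Real.cos x) x := by
        exact (Real.hasDerivAt_sin x).const_add 1
      have h2 := (Real.hasDerivAt_log h1s.ne').comp x this
      simpa [Function.comp_def, div_eq_mul_inv, mul_comm] using h2
    have d2 : HasDerivAt (fun θ => Real.cos θ * Real.log (Real.cos θ))
        (-Real.sin x * Real.log (Real.cos x) + Real.cos x * ((-Real.sin x) / Real.cos x)) x := by
      apply HasDerivAt.mul (Real.hasDerivAt_cos x)
      have h2 := (Real.hasDerivAt_log hc.ne').comp x (Real.hasDerivAt_cos x)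
      simpa [Function.comp_def, div_eq_mul_inv, mul_comm] using h2
    have := ((hasDerivAt_id x).const_mul (2:ℝ)).sub (d1.const_mul 2) |>.add (d2.const_mul 2)
    convert this using 1
    · rfl
    · rfl
    · rfl
    have hcos2 : Real.cos x * Real.cos x = (1 - Real.sin x) * (1 + Real.sin x) := by
      have := Real.sin_sq_add_cos_sq x
      nlinarith
    field_simp
    nlinarith [Real.sin_sq_add_cos_sq x]
  have h := intervalIntegral.integral_eq_sub_of_hasDeriv_right_of_le hab hcont
    (fun x hx => (hderiv x hx).hasDerivWithinAt) phi_intable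
  rw [h]
  simp [Real.cos_pi_div_two, Real.sin_pi_div_two]
  ring

lemma integral_gsin : ∫ θ in (0:ℝ)..(π/2),
    (-(((1+Real.sin θ)/2) * Real.log ((1+Real.sin θ)/2))
      - ((1-Real.sin θ)/2) * Real.log ((1-Real.sin θ)/2))
    = π * Real.log 2 - π/2 := by
  have hcongr : ∫ θ in (0:ℝ)..(π/2),
      (-(((1+Real.sin θ)/2) * Real.log ((1+Real.sin θ)/2))
        - ((1-Real.sin θ)/2) * Real.log ((1-Real.sin θ)/2))
      = ∫ θ in (0:ℝ)..(π/2), (Real.log 2 -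
          ((1/2) * (2*Real.sin θ*Real.log (1+Real.sin θ) - 2*Real.sin θ*Real.log (Real.cos θ))
            + Real.log (Real.cos θ))) := by
    apply intervalIntegral.integral_congr_ae
    have hae : ∀ᵐ (x:ℝ), x ≠ π/2 := by
      have : ({π/2} : Set ℝ) =ᵐ[volume] (∅ : Set ℝ) := by
        simp [ae_eq_empty, measure_singleton]
      filter_upwards [this.mem_iff] with x hx
      intro hxe
      simp [hxe] at hx
    filter_upwards [hae] with θ hθ hmem
    rw [uIoc_of_le (by linarith [Real.pi_pos]), Set.mem_Ioc] at hmem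
    have hθ2 : θ < π/2 := lt_of_le_of_ne hmem.2 hθ
    have hc : 0 < Real.cos θ := Real.cos_pos_of_mem_Ioo ⟨by linarith [hmem.1, Real.pi_pos], hθ2⟩
    have hs : 0 < Real.sin θ := Real.sin_pos_of_pos_of_lt_pi hmem.1 (by linarith [Real.pi_pos])
    set s := Real.sin θ
    set c := Real.cos θ
    have hsc : s^2 + c^2 = 1 := Real.sin_sq_add_cos_sq θ
    have hs1 : s < 1 := by nlinarith
    have h1s : (0:ℝ) < 1 + s := by linarith
    have h1m : (0:ℝ) < 1 - s := by linarith
    have e1 : Real.log ((1+s)/2) = Real.log (1+s) - Real.log 2 :=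
      Real.log_div h1s.ne' two_ne_zero
    have e2 : Real.log ((1-s)/2) = Real.log (1-s) - Real.log 2 :=
      Real.log_div h1m.ne' two_ne_zero
    have e3 : Real.log (1-s) = 2 * Real.log c - Real.log (1+s) := by
      have h : 1 - s = c^2/(1+s) := by field_simp; nlinarith
      rw [h, Real.log_div (by positivity) h1s.ne', Real.log_pow]
      push_cast; ring
    rw [e1, e2, e3]
    ring
  rw [hcongr]
  have hint : IntervalIntegrable (fun θ =>
      (1/2) * (2*Real.sin θ*Real.log (1+Real.sin θ) - 2*Real.sin θ*Real.log (Real.cos θ))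
        + Real.log (Real.cos θ)) volume 0 (π/2) :=
    (phi_intable.const_mul (1/2)).add logcos_intable
  rw [intervalIntegral.integral_sub intervalIntegrable_const hint,
    intervalIntegral.integral_add (phi_intable.const_mul (1/2)) logcos_intable,
    intervalIntegral.integral_const_mul, integral_phi, integral_logcos, integral_logsin,
    intervalIntegral.integral_const]
  simp only [smul_eq_mul, sub_zero]
  ring

lemma sin_image : Real.sin '' (Set.Ioo 0 (π/2)) = Set.Ioo (0:ℝ) 1 := by
  ext y
  constructor
  · rintro ⟨θ, hθ, rfl⟩
    have hmem : θ ∈ Set.Icc (-(π/2)) (π/2) := ⟨by linarith [hθ.1, Real.pi_pos], hθ.2.le⟩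
    have hmem2 : (π/2 : ℝ) ∈ Set.Icc (-(π/2)) (π/2) := ⟨by linarith [Real.pi_pos], le_refl _⟩
    have h1 : Real.sin θ < Real.sin (π/2) := Real.strictMonoOn_sin hmem hmem2 hθ.2
    rw [Real.sin_pi_div_two] at h1
    exact ⟨Real.sin_pos_of_pos_of_lt_pi hθ.1 (by linarith [hθ.2, Real.pi_pos]), h1⟩
  · intro hy
    refine ⟨Real.arcsin y, ⟨Real.arcsin_pos.2 hy.1, Real.arcsin_lt_pi_div_two.2 hy.2⟩, ?_⟩
    exact Real.sin_arcsin (by linarith [hy.1]) hy.2.le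

lemma change_var (F : ℝ → ℝ) : ∫ x in Set.Ioo (0:ℝ) 1, F x
    = ∫ θ in Set.Ioo (0:ℝ) (π/2), |Real.cos θ| • F (Real.sin θ) := by
  rw [← sin_image]
  refine MeasureTheory.integral_image_eq_integral_abs_deriv_smul measurableSet_Ioo
    (fun x _ => (Real.hasDerivAt_sin x).hasDerivWithinAt) ?_ F
  exact Real.injOn_sin.mono (Set.Ioo_subset_Icc_self.trans (Set.Icc_subset_Icc_left (by linarith [Real.pi_pos])))



/-- The information entropy of a pure qubit state in real quantum mechanics
(rank `R = 1`) is `2 ln 2 - 1`. -/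
theorem stmt16 (g : ℝ → ℝ)
    (hg : ∀ δ, g δ = -(((1 + δ) / 2) * Real.log ((1 + δ) / 2))
        - ((1 - δ) / 2) * Real.log ((1 - δ) / 2)) :
    (∫ δ in (0:ℝ)..1, g δ / Real.sqrt (1 - δ ^ 2))
      / (∫ δ in (0:ℝ)..1, 1 / Real.sqrt (1 - δ ^ 2))
      = 2 * Real.log 2 - 1 := by
  have hpi : (0:ℝ) < π := Real.pi_pos
  have key : ∀ θ ∈ Set.Ioo (0:ℝ) (π/2), Real.sqrt (1 - Real.sin θ ^ 2) = Real.cos θ := by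
    intro θ hθ
    have hc : 0 < Real.cos θ := Real.cos_pos_of_mem_Ioo ⟨by linarith [hθ.1], hθ.2⟩
    have h : 1 - Real.sin θ^2 = Real.cos θ^2 := by
      have := Real.sin_sq_add_cos_sq θ; linarith
    rw [h, Real.sqrt_sq hc.le]
  have hcos : ∀ θ ∈ Set.Ioo (0:ℝ) (π/2), 0 < Real.cos θ := fun θ hθ =>
    Real.cos_pos_of_mem_Ioo ⟨by linarith [hθ.1], hθ.2⟩
  -- numerator
  have hN : (∫ δ in (0:ℝ)..1, g δ / Real.sqrt (1 - δ ^ 2))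
      = ∫ θ in (0:ℝ)..(π/2), g (Real.sin θ) := by
    rw [intervalIntegral.integral_of_le (by norm_num : (0:ℝ) ≤ 1),
      MeasureTheory.integral_Ioc_eq_integral_Ioo,
      change_var (fun δ => g δ / Real.sqrt (1 - δ ^ 2)),
      intervalIntegral.integral_of_le (by linarith : (0:ℝ) ≤ π/2),
      MeasureTheory.integral_Ioc_eq_integral_Ioo]
    apply MeasureTheory.setIntegral_congr_fun measurableSet_Ioo
    intro θ hθ
    have hc := hcos θ hθ
    dsimp only
    rw [key θ hθ]
    rw [smul_eq_mul, abs_of_pos hc]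
    field_simp
  -- denominator
  have hD : (∫ δ in (0:ℝ)..1, 1 / Real.sqrt (1 - δ ^ 2)) = π/2 := by
    rw [intervalIntegral.integral_of_le (by norm_num : (0:ℝ) ≤ 1),
      MeasureTheory.integral_Ioc_eq_integral_Ioo,
      change_var (fun δ => 1 / Real.sqrt (1 - δ ^ 2))]
    have : ∫ θ in Set.Ioo (0:ℝ) (π/2),
        |Real.cos θ| • (1 / Real.sqrt (1 - Real.sin θ ^ 2))
        = ∫ θ in Set.Ioo (0:ℝ) (π/2), (1:ℝ) := by
      apply MeasureTheory.setIntegral_congr_fun measurableSet_Ioo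
      intro θ hθ
      have hc := hcos θ hθ
      dsimp only
      rw [key θ hθ, smul_eq_mul, abs_of_pos hc]
      field_simp
    rw [this]
    simp [Real.volume_Ioo]
    linarith
  rw [hN, hD]
  have hval : ∫ θ in (0:ℝ)..(π/2), g (Real.sin θ) = π * Real.log 2 - π/2 := by
    have : (fun θ => g (Real.sin θ)) = fun θ =>
        (-(((1+Real.sin θ)/2) * Real.log ((1+Real.sin θ)/2))
          - ((1-Real.sin θ)/2) * Real.log ((1-Real.sin θ)/2)) := by
      funext θ; rw [hg]
    rw [this, integral_gsin]
  rw [hval, div_eq_iff (by positivity : (π/2 : ℝ) ≠ 0)]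
  ring
end

section
/- The information entropy of a pure qubit state in quaternionic quantum mechanics (rank R = 4) is 7/12: ∫₀¹ g(δ)(1−δ²) dδ / ∫₀¹ (1−δ²) dδ = 7/12, where g is the binary entropy of ((1+δ)/2, (1−δ)/2). -/
noncomputable def F17 (δ : ℝ) : ℝ :=
  Real.log 2 * (δ - δ^3/3)
  + (-(1+δ)^2/3 + (1+δ)^3/8) * ((1+δ) * Real.log (1+δ))
  - (-(1+δ)^3/9 + (1+δ)^4/32)
  - (-(1-δ)^2/3 + (1-δ)^3/8) * ((1-δ) * Real.log (1-δ))
  + (-(1-δ)^3/9 + (1-δ)^4/32)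

lemma F17_deriv (x : ℝ) (h1 : (0:ℝ) < 1 + x) (h2 : (0:ℝ) < 1 - x) :
    HasDerivAt F17
      ((1 - x^2) * Real.log 2
        - (1+x)^2 * (1-x) / 2 * Real.log (1+x)
        - (1-x)^2 * (1+x) / 2 * Real.log (1-x)) x := by
  have hu : HasDerivAt (fun δ : ℝ => 1 + δ) 1 x := by
    simpa using (hasDerivAt_id x).const_add 1
  have hv : HasDerivAt (fun δ : ℝ => 1 - δ) (-1) x := by
    simpa using (hasDerivAt_id x).const_sub 1
  have hlu : HasDerivAt (fun δ : ℝ => Real.log (1 + δ)) (1/(1+x)) x := by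
    exact ((Real.hasDerivAt_log h1.ne').comp x hu).congr_deriv (by ring)
  have hlv : HasDerivAt (fun δ : ℝ => Real.log (1 - δ)) (-(1/(1-x))) x := by
    exact ((Real.hasDerivAt_log h2.ne').comp x hv).congr_deriv (by ring)
  have hA : HasDerivAt (fun δ : ℝ => (1+δ) * Real.log (1+δ))
      (1 * Real.log (1+x) + (1+x) * (1/(1+x))) x := hu.mul hlu
  have hB : HasDerivAt (fun δ : ℝ => (1-δ) * Real.log (1-δ))
      ((-1) * Real.log (1-x) + (1-x) * (-(1/(1-x)))) x := hv.mul hlv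
  have hp1 : HasDerivAt (fun δ : ℝ => -(1+δ)^2/3 + (1+δ)^3/8)
      (-(2*(1+x))/3 + 3*(1+x)^2/8) x := by
    have := (((hu.pow 2).neg.div_const 3).add ((hu.pow 3).div_const 8))
    exact this.congr_deriv (by ring)
  have hp2 : HasDerivAt (fun δ : ℝ => -(1-δ)^2/3 + (1-δ)^3/8)
      ((2*(1-x))/3 - 3*(1-x)^2/8) x := by
    have := (((hv.pow 2).neg.div_const 3).add ((hv.pow 3).div_const 8))
    exact this.congr_deriv (by ring)
  have hq1 : HasDerivAt (fun δ : ℝ => -(1+δ)^3/9 + (1+δ)^4/32)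
      (-(3*(1+x)^2)/9 + 4*(1+x)^3/32) x := by
    have := (((hu.pow 3).neg.div_const 9).add ((hu.pow 4).div_const 32))
    exact this.congr_deriv (by ring)
  have hq2 : HasDerivAt (fun δ : ℝ => -(1-δ)^3/9 + (1-δ)^4/32)
      ((3*(1-x)^2)/9 - 4*(1-x)^3/32) x := by
    have := (((hv.pow 3).neg.div_const 9).add ((hv.pow 4).div_const 32))
    exact this.congr_deriv (by ring)
  have hpoly : HasDerivAt (fun δ : ℝ => Real.log 2 * (δ - δ^3/3))
      (Real.log 2 * (1 - 3*x^2/3)) x := by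
    simpa using (((hasDerivAt_id x).sub (((hasDerivAt_id x).pow 3).div_const 3))).const_mul (Real.log 2)
  have H := ((((hpoly.add (hp1.mul hA)).sub hq1).sub (hp2.mul hB)).add hq2)
  refine H.congr_deriv ?_
  have e1 : (1+x) * (1/(1+x)) = 1 := by field_simp
  have e2 : (1-x) * (-(1/(1-x))) = -1 := by field_simp
  rw [e1, e2]
  ring

/-- The information entropy of a pure qubit state in quaternionic quantum
mechanics (rank `R = 4`) is `7/12`. -/
theorem stmt17 (g : ℝ → ℝ)
    (hg : ∀ δ, g δ = -(((1 + δ) / 2) * Real.log ((1 + δ) / 2))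
        - ((1 - δ) / 2) * Real.log ((1 - δ) / 2)) :
    (∫ δ in (0:ℝ)..1, g δ * (1 - δ ^ 2))
      / (∫ δ in (0:ℝ)..1, (1 - δ ^ 2)) = 7 / 12 := by
  have hgc : Continuous g := by
    have : g = fun δ => -((1 + δ) / 2 * Real.log ((1 + δ) / 2))
        - (1 - δ) / 2 * Real.log ((1 - δ) / 2) := funext hg
    rw [this]
    have h1 : Continuous fun δ : ℝ => (1 + δ)/2 * Real.log ((1 + δ)/2) :=
      Real.continuous_mul_log.comp (by continuity)
    have h2 : Continuous fun δ : ℝ => (1 - δ)/2 * Real.log ((1 - δ)/2) :=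
      Real.continuous_mul_log.comp (by continuity)
    exact h1.neg.sub h2
  have hFc : Continuous F17 := by
    have h1 : Continuous fun δ : ℝ => (1 + δ) * Real.log (1 + δ) :=
      Real.continuous_mul_log.comp (by continuity)
    have h2 : Continuous fun δ : ℝ => (1 - δ) * Real.log (1 - δ) :=
      Real.continuous_mul_log.comp (by continuity)
    unfold F17
    fun_prop
  have hint : IntervalIntegrable (fun δ => g δ * (1 - δ^2)) MeasureTheory.volume 0 1 :=
    (hgc.mul (by continuity)).intervalIntegrable 0 1
  have hderiv : ∀ x ∈ Set.Ioo (0:ℝ) 1,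
      HasDerivWithinAt F17 (g x * (1 - x^2)) (Set.Ioi x) x := by
    intro x hx
    have h1 : (0:ℝ) < 1 + x := by linarith [hx.1]
    have h2 : (0:ℝ) < 1 - x := by linarith [hx.2]
    have H := F17_deriv x h1 h2
    have hg' : g x * (1 - x^2) = (1 - x^2) * Real.log 2
        - (1+x)^2 * (1-x) / 2 * Real.log (1+x)
        - (1-x)^2 * (1+x) / 2 * Real.log (1-x) := by
      rw [hg x, Real.log_div h1.ne' two_ne_zero, Real.log_div h2.ne' two_ne_zero]
      ring
    rw [hg']
    exact H.hasDerivWithinAt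
  have hnum : (∫ δ in (0:ℝ)..1, g δ * (1 - δ^2)) = F17 1 - F17 0 :=
    intervalIntegral.integral_eq_sub_of_hasDeriv_right_of_le zero_le_one
      (hFc.continuousOn) hderiv hint
  have hF1 : F17 1 - F17 0 = 7/18 := by
    unfold F17
    norm_num
    ring
  have hden : (∫ δ in (0:ℝ)..1, (1 - δ^2)) = 2/3 := by
    have : (∫ δ in (0:ℝ)..1, (1 - δ^2)) =
        (∫ _δ in (0:ℝ)..1, (1:ℝ)) - ∫ δ in (0:ℝ)..1, δ^2 := by
      rw [← intervalIntegral.integral_sub intervalIntegrable_const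
        (intervalIntegral.intervalIntegrable_pow 2)]
    rw [this, integral_pow]
    simp
    norm_num
  rw [hnum, hF1, hden]
  norm_num
end
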